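/- For the endomorphism f_m above, the Magnus matrix r(f_m^acy) = (conjugate of ∂f_m(γ_j)/∂γ_i)_{ij} over the fraction field K_{H₁} is lower triangular with diagonal entries (1 - γ₂ + γ₂² - ... + γ₂^{2m}, 1, 1, ..., 1); consequently det r(f_m^acy) = 1 - γ₂ + ... + γ₂^{2m}. -/

import Mathlib

/-- The Laurent polynomial ring `ℤ[H₁] = ℤ[γ₁^{±1}, …, γ_n^{±1}]`. -/
abbrev LaurentRing (n : ℕ) : Type := AddMonoidAlgebra ℤ (Fin n →₀ ℤ)

/-- The monomial `γ^x` attached to `x ∈ H₁ = ℤⁿ`. -/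
noncomputable def monoR (n : ℕ) (x : Fin n →₀ ℤ) : LaurentRing n :=
  AddMonoidAlgebra.single x 1

/-!
Write `c = γ₁γ₂⁻¹γ₁⁻¹γ₂⁻¹`, so that `f_m(γ₁) = c^m γ₁ γ₂^{2m}`. Since `∂γ₂/∂γ₁ = 0`, the Fox
calculus gives `∂c/∂γ₁ = 1 - γ₂⁻¹` and
`∂f_m(γ₁)/∂γ₁ = (1 + γ₂⁻² + ⋯ + γ₂^{-2(m-1)})(1 - γ₂⁻¹) + γ₂^{-2m}`,
the alternating geometric sum in `-γ₂⁻¹`; the involution turns it into `1 - γ₂ + ⋯ + γ₂^{2m}`.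
All other columns are standard basis vectors, so the matrix is lower triangular with
determinant its `(1,1)` entry.
-/

open Finset

theorem geom_sum_sq_mul_one_sub {R : Type*} [CommRing R] (x : R) (m : ℕ) :
    (∑ j ∈ range m, (x ^ 2) ^ j) * (1 - x) = ∑ k ∈ range (2 * m), (-x) ^ k := by
  induction m with
  | zero => simp
  | succ p ih =>
    rw [sum_range_succ, add_mul, ih, show 2 * (p + 1) = 2 * p + 1 + 1 by ring,
      sum_range_succ, sum_range_succ, pow_succ (-x) (2 * p), (even_two_mul p).neg_pow, pow_mul]
    ring

section FoxDerivative

variable {G R : Type*} [Group G]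

def IsFoxDerivative [Ring R] (ε : G →* Rˣ) (D : G → R) : Prop :=
  ∀ u v, D (u * v) = D u + ε u * D v

namespace IsFoxDerivative

variable [Ring R] {ε : G →* Rˣ} {D : G → R}

theorem map_one (hD : IsFoxDerivative ε D) : D 1 = 0 := by
  simpa using hD 1 1

theorem map_inv (hD : IsFoxDerivative ε D) (u : G) : D u⁻¹ = -(ε u⁻¹ * D u) := by
  have h := hD u⁻¹ u
  rw [inv_mul_cancel, hD.map_one] at h
  exact eq_neg_of_add_eq_zero_left h.symm

theorem map_pow (hD : IsFoxDerivative ε D) (u : G) (k : ℕ) :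
    D (u ^ k) = (∑ j ∈ range k, (ε u : R) ^ j) * D u := by
  induction k with
  | zero => simp [hD.map_one]
  | succ p ih =>
    rw [pow_succ, hD, ih, sum_range_succ, _root_.map_pow, Units.val_pow_eq_pow_val, add_mul]

end IsFoxDerivative

end FoxDerivative

section FoxDerivativeComm

variable {G R : Type*} [Group G] [CommRing R] {ε : G →* Rˣ} {D : G → R}

def fmWord (a b : G) (m : ℕ) : G :=
  (a * b⁻¹ * a⁻¹ * b⁻¹) ^ m * a * b ^ (2 * m)

theorem IsFoxDerivative.map_fmWord (hD : IsFoxDerivative ε D) {a b : G} (ha : D a = 1)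
    (hb : D b = 0) (m : ℕ) :
    D (fmWord a b m) = ∑ k ∈ range (2 * m + 1), (-((ε b⁻¹ : Rˣ) : R)) ^ k := by
  set s : R := ((ε b⁻¹ : Rˣ) : R)
  set c : G := a * b⁻¹ * a⁻¹ * b⁻¹
  have hεa : (ε a : R) * ε a⁻¹ = 1 := by
    rw [← Units.val_mul, ← _root_.map_mul, mul_inv_cancel, _root_.map_one, Units.val_one]
  have hc : D c = 1 - s := by
    simp only [c, hD _ _, hD.map_inv, ha, hb, _root_.map_mul, Units.val_mul]
    linear_combination (-s) * hεa
  have hεc : (ε c : R) = s ^ 2 := by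
    simp only [c, _root_.map_mul, Units.val_mul]
    linear_combination s ^ 2 * hεa
  rw [fmWord, hD, hD, hD.map_pow, hD.map_pow, ha, hb, hc, _root_.map_pow, Units.val_pow_eq_pow_val,
    hεc, sum_range_succ, ← geom_sum_sq_mul_one_sub, (even_two_mul m).neg_pow, pow_mul]
  ring

end FoxDerivativeComm

theorem monoR_add {n : ℕ} (x y : Fin n →₀ ℤ) : monoR n (x + y) = monoR n x * monoR n y := by
  simp [monoR, AddMonoidAlgebra.single_mul_single]

theorem Units.val_inv_eq_monoR_neg {n : ℕ} {u : (LaurentRing n)ˣ} {x : Fin n →₀ ℤ}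
    (hu : (u : LaurentRing n) = monoR n x) :
    ((u⁻¹ : (LaurentRing n)ˣ) : LaurentRing n) = monoR n (-x) :=
  Units.inv_eq_of_mul_eq_one_right <| by
    rw [hu, ← monoR_add, add_neg_cancel]
    rfl

theorem neg_monoR_single_one_pow {n : ℕ} (i : Fin n) (k : ℕ) :
    (-monoR n (Finsupp.single i 1)) ^ k
      = AddMonoidAlgebra.single (Finsupp.single i (k : ℤ)) ((-1 : ℤ) ^ k) := by
  rw [monoR, ← AddMonoidAlgebra.single_neg, AddMonoidAlgebra.single_pow, Finsupp.smul_single,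
    nsmul_one]

section

variable {ι R : Type*} [LinearOrder ι] {M : Matrix ι ι R} {k : ι}

theorem Matrix.isLowerTriangular_of_col_eq_one_of_ne [Zero R] [One R] (hk : ∀ j, k ≤ j)
    (hcol : ∀ i j, j ≠ k → M i j = if i = j then 1 else 0) : M.IsLowerTriangular :=
  fun i j hij => by
    have hij : i < j := OrderDual.toDual_lt_toDual.mp hij
    rw [hcol i j (ne_of_gt (lt_of_le_of_lt (hk i) hij)), if_neg (ne_of_lt hij)]

theorem Matrix.det_eq_of_col_eq_one_of_ne [Fintype ι] [CommRing R] (hk : ∀ j, k ≤ j)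
    (hcol : ∀ i j, j ≠ k → M i j = if i = j then 1 else 0) : M.det = M k k := by
  rw [M.det_of_isLowerTriangular (Matrix.isLowerTriangular_of_col_eq_one_of_ne hk hcol),
    Fintype.prod_eq_single k fun j hj => by rw [hcol j j hj, if_pos rfl]]

end

/-- For the endomorphism `f_m` of `F_n` (`n ≥ 2`) with
`f_m(γ₁) = (γ₁γ₂⁻¹γ₁⁻¹γ₂⁻¹)^m γ₁ γ₂^{2m}` and `f_m(γⱼ) = γⱼ` for `j ≥ 2`, the Magnus
matrix `r(f_m^acy) = (σ(∂f_m(γⱼ)/∂γᵢ))_{ij}` is lower triangular with diagonal entries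
`(1 - γ₂ + ⋯ + γ₂^{2m}, 1, …, 1)`; consequently `det r(f_m^acy) = 1 - γ₂ + ⋯ + γ₂^{2m}`.
Here `d i` is the Fox derivative `∂/∂γᵢ` pushed to `ℤ[H₁]` (base case `d i (γⱼ) = δᵢⱼ`,
product rule with `ε` the abelianization-monomial map) and `σ` is the involution. -/
theorem magnus_matrix_fm (n m : ℕ) (hn : 2 ≤ n)
    (ε : FreeGroup (Fin n) →* (LaurentRing n)ˣ)
    (hε : ∀ j : Fin n, (ε (FreeGroup.of j) : LaurentRing n) = monoR n (Finsupp.single j 1))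
    (σ : LaurentRing n ≃+* LaurentRing n)
    (hσ : ∀ x : Fin n →₀ ℤ, σ (monoR n x) = monoR n (-x))
    (d : Fin n → FreeGroup (Fin n) → LaurentRing n)
    (hbase : ∀ i j : Fin n, d i (FreeGroup.of j) = if i = j then 1 else 0)
    (hprod : ∀ (i : Fin n) (u v : FreeGroup (Fin n)),
      d i (u * v) = d i u + (ε u : LaurentRing n) * d i v)
    (fm : Fin n → FreeGroup (Fin n))
    (hfm0 : fm (⟨0, by omega⟩ : Fin n)
      = (FreeGroup.of (⟨0, by omega⟩ : Fin n) * (FreeGroup.of (⟨1, by omega⟩ : Fin n))⁻¹ *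
          (FreeGroup.of (⟨0, by omega⟩ : Fin n))⁻¹ * (FreeGroup.of (⟨1, by omega⟩ : Fin n))⁻¹) ^ m *
          FreeGroup.of (⟨0, by omega⟩ : Fin n) *
          (FreeGroup.of (⟨1, by omega⟩ : Fin n)) ^ (2 * m))
    (hfm : ∀ j : Fin n, j ≠ (⟨0, by omega⟩ : Fin n) → fm j = FreeGroup.of j)
    (M : Matrix (Fin n) (Fin n) (LaurentRing n))
    (hM : ∀ i j : Fin n, M i j = σ (d i (fm j))) :
    (∀ i j : Fin n, i < j → M i j = 0) ∧
    (M (⟨0, by omega⟩ : Fin n) (⟨0, by omega⟩ : Fin n)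
      = ∑ k ∈ Finset.range (2 * m + 1),
          AddMonoidAlgebra.single (Finsupp.single (⟨1, by omega⟩ : Fin n) (k : ℤ))
            ((-1 : ℤ) ^ k)) ∧
    (∀ j : Fin n, j ≠ (⟨0, by omega⟩ : Fin n) → M j j = 1) ∧
    M.det = ∑ k ∈ Finset.range (2 * m + 1),
        AddMonoidAlgebra.single (Finsupp.single (⟨1, by omega⟩ : Fin n) (k : ℤ))
          ((-1 : ℤ) ^ k) := by
  set i0 : Fin n := ⟨0, by omega⟩
  set i1 : Fin n := ⟨1, by omega⟩
  have hi0 : ∀ j, i0 ≤ j := fun j => Nat.zero_le j.val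
  have hcol : ∀ i j, j ≠ i0 → M i j = if i = j then 1 else 0 := by
    intro i j hj
    rw [hM, hfm j hj, hbase, apply_ite σ, map_one, map_zero]
  have hentry : M i0 i0 = ∑ k ∈ range (2 * m + 1),
      AddMonoidAlgebra.single (Finsupp.single i1 (k : ℤ)) ((-1 : ℤ) ^ k) := by
    have hd0 : d i0 (FreeGroup.of i0) = 1 := by rw [hbase, if_pos rfl]
    have hd1 : d i0 (FreeGroup.of i1) = 0 := by rw [hbase, if_neg (by simp [i0, i1, Fin.ext_iff])]
    rw [hM, hfm0, ← fmWord, IsFoxDerivative.map_fmWord (hprod i0) hd0 hd1, map_sum]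
    refine sum_congr rfl fun k _ => ?_
    rw [map_pow, map_neg, map_inv, Units.val_inv_eq_monoR_neg (hε i1), hσ, neg_neg,
      neg_monoR_single_one_pow]
  refine ⟨fun i j hij => Matrix.isLowerTriangular_of_col_eq_one_of_ne hi0 hcol hij, hentry,
    fun j hj => by rw [hcol j j hj, if_pos rfl], ?_⟩
  rw [Matrix.det_eq_of_col_eq_one_of_ne hi0 hcol, hentry]
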